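/- arXiv:1702.06457 — 3 statements merged into one kernel-verified Lean document; each statement's English description precedes it below -/
import Mathlib

section
/- Let H be a real Hilbert space, A ⊆ H a nonempty bounded symmetric set (A = −A), L > 0, f : H → ℝ a convex Fréchet-differentiable function whose gradient ∇f is L-Lipschitz, δ ∈ (0,1], and ρ > 0. Let x⋆ ∈ ρ·conv(A) satisfy f(x⋆) ≤ f(w) for all w ∈ ρ·conv(A). Let (x_t)_{t≥0} be a sequence with x_t ∈ ρ·conv(A) for every t, such that for every t there is z_t ∈ A with ⟪∇f(x_t), z_t⟫ ≤ δ·inf_{z∈A} ⟪∇f(x_t), z⟫ (a δ-approximate matching-pursuit LMO output), and x_{t+1} = x_t + γ_t z_t where γ_t = −⟪∇f(x_t), z_t⟫/(L‖z_t‖²) if z_t ≠ 0 and γ_t = 0 if z_t = 0. Then for every t ≥ 0, f(x_t) − f(x⋆) ≤ 4·((2/δ)·L·ρ²·radius(A)² + ε₀)/(δ·t + 4), where ε₀ := f(x₀) − f(x⋆). -/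
/-!
Write `gap t = f (x t) - f xstar`. Because `A` is symmetric, `xstar - x t ∈ 2ρ • conv A`, and a
linear functional attains its infimum over `conv A` on `A`; with the gradient inequality of the
convex `f` this turns the oracle condition into `⟪∇f (x t), z t⟫ ≤ -(δ / 2ρ) gap t`.
The norm-corrective step minimises the quadratic upper bound given by the `L`-Lipschitz gradient
along `z t`, so it decreases `f` by `⟪∇f (x t), z t⟫² / (2L‖z t‖²)`. With `‖z t‖ ≤ radius A = r`
this gives `(δ / 2ρ)² gap t ² ≤ 2Lr² (gap t - gap (t + 1))`, i.e. `1 / gap` grows by at least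
`δ² / (8Lρ²r²)` per step, whence `gap t ≤ 8Lρ²r² / (δ² t)`; the stated bound combines this with
`gap t ≤ gap 0`.
-/

open scoped RealInnerProductSpace Pointwise Classical

open Set

section Recursion

variable {h : ℕ → ℝ} {a b : ℝ}

theorem antitone_of_sq_le_mul_sub_succ (ha : 0 < a) (hb : 0 ≤ b) (hh : ∀ t, 0 ≤ h t)
    (hstep : ∀ t, a * h t ^ 2 ≤ b * (h t - h (t + 1))) : Antitone h := by
  refine antitone_nat_of_succ_le fun t => ?_
  rcases hb.eq_or_lt with rfl | hb
  · have hsq : a * h (t + 1) ^ 2 ≤ 0 := by simpa using hstep (t + 1)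
    have hzero : h (t + 1) = 0 := by
      by_contra hne
      exact hsq.not_gt (mul_pos ha (by positivity))
    exact hzero ▸ hh t
  · nlinarith [hstep t, hh t]

theorem mul_add_le_of_sq_le_mul_sub_succ (ha : 0 < a) (hb : 0 ≤ b) (hh : ∀ t, 0 ≤ h t)
    (hstep : ∀ t, a * h t ^ 2 ≤ b * (h t - h (t + 1))) (t : ℕ) :
    h t * (b + a * h 0 * t) ≤ b * h 0 := by
  induction t with
  | zero => simp [mul_comm]
  | succ t ih =>
    have hle : h (t + 1) ≤ h t := antitone_of_sq_le_mul_sub_succ ha hb hh hstep t.le_succ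
    rcases (hh t).eq_or_lt with hzero | hpos
    · have : h (t + 1) = 0 := le_antisymm (hzero ▸ hle) (hh _)
      simpa [this] using mul_nonneg hb (hh 0)
    · -- `1 / h (t + 1) ≥ 1 / h t + a / b`, cleared of denominators
      refine le_of_mul_le_mul_left ?_ hpos
      push_cast
      nlinarith [mul_le_mul_of_nonneg_left ih (hh (t + 1)),
        mul_nonneg (hh 0) (sub_nonneg.2 (hstep t)),
        mul_nonneg (mul_nonneg (mul_nonneg ha.le (hh 0)) (hh t)) (sub_nonneg.2 hle)]

theorem mul_le_of_sq_le_mul_sub_succ (ha : 0 < a) (hb : 0 ≤ b) (hh : ∀ t, 0 ≤ h t)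
    (hstep : ∀ t, a * h t ^ 2 ≤ b * (h t - h (t + 1))) (t : ℕ) :
    h t * (a * t) ≤ b := by
  have hbound := mul_add_le_of_sq_le_mul_sub_succ ha hb hh hstep t
  rcases (hh 0).eq_or_lt with hzero | hpos
  · have : h t = 0 :=
      le_antisymm (hzero ▸ antitone_of_sq_le_mul_sub_succ ha hb hh hstep t.zero_le) (hh t)
    simpa [this] using hb
  · refine le_of_mul_le_mul_left ?_ hpos
    nlinarith [hh t]

end Recursion

section Smooth

variable {H : Type*} [NormedAddCommGroup H] [InnerProductSpace ℝ H] [CompleteSpace H]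
  {f : H → ℝ} {f' : H → H} {L : ℝ}

theorem HasGradientAt.hasDerivAt_comp_add_smul {g a v : H} {s : ℝ}
    (hf : HasGradientAt f g (a + s • v)) :
    HasDerivAt (fun s : ℝ => f (a + s • v)) ⟪g, v⟫ s := by
  have hline : HasDerivAt (fun s : ℝ => a + s • v) v s := by
    simpa using ((hasDerivAt_id s).smul_const v).const_add a
  simpa [Function.comp_def] using
    (hasGradientAt_iff_hasFDerivAt.mp hf).comp_hasDerivAt s hline

theorem ConvexOn.add_inner_le_of_hasGradientAt (hconv : ConvexOn ℝ univ f) {g a : H}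
    (hf : HasGradientAt f g a) (b : H) : f a + ⟪g, b - a⟫ ≤ f b := by
  have hline : ConvexOn ℝ univ fun s : ℝ => f (a + s • (b - a)) := by
    simpa [Function.comp_def, AffineMap.lineMap_apply, add_comm] using
      hconv.comp_affineMap (AffineMap.lineMap a b)
  have hderiv : HasDerivAt (fun s : ℝ => f (a + s • (b - a))) ⟪g, b - a⟫ 0 :=
    HasGradientAt.hasDerivAt_comp_add_smul (by simpa using hf)
  have hslope := hline.le_slope_of_hasDerivAt (mem_univ 0) (mem_univ 1) one_pos hderiv
  simp only [slope_def_field, one_smul, add_sub_cancel, zero_smul, add_zero, sub_zero,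
    div_one] at hslope
  linarith

theorem le_add_inner_add_sq_of_lipschitz_gradient
    (hf : ∀ w, HasGradientAt f (f' w) w) (hLip : ∀ u v, ‖f' u - f' v‖ ≤ L * ‖u - v‖)
    (a v : H) : f (a + v) ≤ f a + ⟪f' a, v⟫ + L / 2 * ‖v‖ ^ 2 := by
  have hderiv (s : ℝ) : HasDerivAt (fun s : ℝ => f (a + s • v) - f a - s * ⟪f' a, v⟫)
      (⟪f' (a + s • v), v⟫ - ⟪f' a, v⟫) s := by
    have hcomp : HasDerivAt (fun s : ℝ => f (a + s • v)) ⟪f' (a + s • v), v⟫ s :=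
      (hf _).hasDerivAt_comp_add_smul
    exact (hcomp.sub_const (f a)).fun_sub (hasDerivAt_mul_const _)
  have hbound (s : ℝ) : HasDerivAt (fun s : ℝ => L / 2 * s ^ 2 * ‖v‖ ^ 2) (L * s * ‖v‖ ^ 2) s :=
    (((hasDerivAt_pow 2 s).const_mul (L / 2)).mul_const _).congr_deriv (by push_cast; ring)
  have hcmp := image_le_of_deriv_right_le_deriv_boundary
    (fun s _ => (hderiv s).continuousAt.continuousWithinAt)
    (fun s _ => (hderiv s).hasDerivWithinAt) (by simp)
    (fun s _ => (hbound s).continuousAt.continuousWithinAt)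
    (fun s _ => (hbound s).hasDerivWithinAt) ?_ (right_mem_Icc.2 zero_le_one)
  · simp only [one_smul, one_mul, one_pow, mul_one, tsub_le_iff_right] at hcmp
    linarith
  rintro s ⟨hs, -⟩
  calc ⟪f' (a + s • v), v⟫ - ⟪f' a, v⟫ = ⟪f' (a + s • v) - f' a, v⟫ := (inner_sub_left ..).symm
    _ ≤ ‖f' (a + s • v) - f' a‖ * ‖v‖ := real_inner_le_norm _ _
    _ ≤ L * ‖s • v‖ * ‖v‖ := by gcongr; simpa using hLip (a + s • v) a
    _ = L * s * ‖v‖ ^ 2 := by rw [norm_smul, Real.norm_of_nonneg hs]; ring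

theorem le_sub_sq_div_of_normCorrectedStep (hf : ∀ w, HasGradientAt f (f' w) w)
    (hLip : ∀ u v, ‖f' u - f' v‖ ≤ L * ‖u - v‖) (hL : 0 < L) (a : H) {z : H} (hz : z ≠ 0) :
    f (a + (-⟪f' a, z⟫ / (L * ‖z‖ ^ 2)) • z) ≤ f a - ⟪f' a, z⟫ ^ 2 / (2 * L * ‖z‖ ^ 2) := by
  have hnz : ‖z‖ ≠ 0 := norm_ne_zero_iff.2 hz
  refine (le_add_inner_add_sq_of_lipschitz_gradient hf hLip a _).trans_eq ?_
  rw [real_inner_smul_right, norm_smul, mul_pow, Real.norm_eq_abs, sq_abs]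
  field_simp
  ring

theorem sq_le_mul_sub_of_normCorrectedStep (hf : ∀ w, HasGradientAt f (f' w) w)
    (hLip : ∀ u v, ‖f' u - f' v‖ ≤ L * ‖u - v‖) (hL : 0 < L) {a z : H} {e r : ℝ}
    (he : 0 ≤ e) (hze : ⟪f' a, z⟫ ≤ -e) (hzr : ‖z‖ ≤ r) :
    e ^ 2 ≤ 2 * L * r ^ 2 *
      (f a - f (a + (if z = 0 then (0 : ℝ) else -⟪f' a, z⟫ / (L * ‖z‖ ^ 2)) • z)) := by
  by_cases hz : z = 0
  · have : e = 0 := by simp only [hz, inner_zero_right] at hze; linarith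
    simp [this, hz]
  rw [if_neg hz]
  have hdesc := le_sub_sq_div_of_normCorrectedStep hf hLip hL a hz
  have hzpos : 0 < 2 * L * ‖z‖ ^ 2 := by positivity
  set G := ⟪f' a, z⟫
  calc e ^ 2 ≤ G ^ 2 := by nlinarith
    _ = 2 * L * ‖z‖ ^ 2 * (G ^ 2 / (2 * L * ‖z‖ ^ 2)) := by field_simp
    _ ≤ 2 * L * ‖z‖ ^ 2 * (f a - f (a + (-G / (L * ‖z‖ ^ 2)) • z)) := by gcongr; linarith
    _ ≤ 2 * L * r ^ 2 * (f a - f (a + (-G / (L * ‖z‖ ^ 2)) • z)) := by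
      gcongr
      linarith [div_nonneg (sq_nonneg G) hzpos.le]

end Smooth

section SymmetricHull

variable {E : Type*} [AddCommGroup E] [Module ℝ E] {A : Set E}

theorem sub_mem_two_mul_smul_convexHull (hsym : A = -A) {ρ : ℝ} (hρ : 0 ≤ ρ) {u v : E}
    (hu : u ∈ ρ • convexHull ℝ A) (hv : v ∈ ρ • convexHull ℝ A) :
    u - v ∈ (2 * ρ) • convexHull ℝ A := by
  have hneg : -v ∈ ρ • convexHull ℝ A := by
    rw [hsym, convexHull_neg, smul_set_neg]
    exact neg_mem_neg.2 hv
  rw [two_mul, (convex_convexHull ℝ A).add_smul hρ hρ, sub_eq_add_neg]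
  exact add_mem_add hu hneg

end SymmetricHull

theorem sInf_image_inner_le_of_mem_convexHull {H : Type*} [NormedAddCommGroup H]
    [InnerProductSpace ℝ H] {A : Set H} (hA : Bornology.IsBounded A) (g : H) {w : H}
    (hw : w ∈ convexHull ℝ A) : sInf ((fun y => ⟪g, y⟫) '' A) ≤ ⟪g, w⟫ := by
  obtain ⟨y, hy, hyw⟩ := ((innerₛₗ ℝ g).concaveOn convex_univ).exists_le_of_mem_convexHull
    (subset_univ A) hw
  exact (csInf_le ((innerSL ℝ g).lipschitz.isBounded_image hA).bddBelow ⟨y, hy, rfl⟩).trans hyw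

theorem inner_le_neg_mul_gap_of_approxLMO {H : Type*} [NormedAddCommGroup H]
    [InnerProductSpace ℝ H] [CompleteSpace H] {f : H → ℝ} (hconv : ConvexOn ℝ univ f)
    {A : Set H} (hsym : A = -A) (hA : Bornology.IsBounded A) {ρ δ : ℝ} (hρ : 0 < ρ)
    (hδ : 0 ≤ δ) {g x xstar z : H} (hg : HasGradientAt f g x)
    (hx : x ∈ ρ • convexHull ℝ A) (hxstar : xstar ∈ ρ • convexHull ℝ A)
    (hz : ⟪g, z⟫ ≤ δ * sInf ((fun w => ⟪g, w⟫) '' A)) :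
    ⟪g, z⟫ ≤ -(δ / (2 * ρ)) * (f x - f xstar) := by
  obtain ⟨m, hm, hmx⟩ := sub_mem_two_mul_smul_convexHull hsym hρ.le hxstar hx
  have hgrad := hconv.add_inner_le_of_hasGradientAt hg xstar
  rw [← hmx, real_inner_smul_right] at hgrad
  calc ⟪g, z⟫ ≤ δ * sInf ((fun w => ⟪g, w⟫) '' A) := hz
    _ ≤ δ * ⟪g, m⟫ := by gcongr; exact sInf_image_inner_le_of_mem_convexHull hA g hm
    _ ≤ δ * (-(f x - f xstar) / (2 * ρ)) := by
      gcongr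
      rw [le_div_iff₀ (by positivity)]
      linarith
    _ = -(δ / (2 * ρ)) * (f x - f xstar) := by ring

theorem matchingPursuit_sublinear_convergence_general
    {H : Type*} [NormedAddCommGroup H] [InnerProductSpace ℝ H] [CompleteSpace H]
    (A : Set H) (hAbdd : Bornology.IsBounded A)
    (hsym : A = -A)
    (L : ℝ) (hL : 0 < L)
    (f : H → ℝ) (f' : H → H)
    (hconv : ConvexOn ℝ Set.univ f)
    (hdiff : ∀ w : H, HasGradientAt f (f' w) w)
    (hLip : ∀ u v : H, ‖f' u - f' v‖ ≤ L * ‖u - v‖)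
    (δ : ℝ) (hδ : δ ∈ Set.Ioc (0:ℝ) 1)
    (ρ : ℝ) (hρ : 0 < ρ)
    (xstar : H) (hxstar : xstar ∈ ρ • convexHull ℝ A)
    (hmin : ∀ w ∈ ρ • convexHull ℝ A, f xstar ≤ f w)
    (x z : ℕ → H)
    (hxmem : ∀ t, x t ∈ ρ • convexHull ℝ A)
    (hzA : ∀ t, z t ∈ A)
    (hlmo : ∀ t, ⟪f' (x t), z t⟫ ≤ δ * sInf ((fun w => ⟪f' (x t), w⟫) '' A))
    (hupd : ∀ t, x (t + 1) =
        x t + (if z t = 0 then (0:ℝ) else -⟪f' (x t), z t⟫ / (L * ‖z t‖ ^ 2)) • z t) :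
    ∀ t : ℕ, f (x t) - f xstar ≤
      4 * ((2 / δ) * L * ρ ^ 2 * (sSup ((fun w : H => ‖w‖) '' A)) ^ 2 + (f (x 0) - f xstar))
        / (δ * t + 4) := by
  have hδ0 : 0 < δ := hδ.1
  set r := sSup ((fun w : H => ‖w‖) '' A)
  set gap : ℕ → ℝ := fun t => f (x t) - f xstar
  have hgap (t : ℕ) : 0 ≤ gap t := sub_nonneg.2 (hmin _ (hxmem t))
  have hstep (t : ℕ) : (δ / (2 * ρ)) ^ 2 * gap t ^ 2 ≤ 2 * L * r ^ 2 * (gap t - gap (t + 1)) := by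
    have hzr : ‖z t‖ ≤ r :=
      le_csSup (lipschitzWith_one_norm.isBounded_image hAbdd).bddAbove ⟨z t, hzA t, rfl⟩
    have horacle := inner_le_neg_mul_gap_of_approxLMO hconv hsym hAbdd hρ hδ0.le (hdiff (x t))
      (hxmem t) hxstar (hlmo t)
    rw [← mul_pow, show gap t - gap (t + 1) = f (x t) - f (x (t + 1)) by ring, hupd t]
    exact sq_le_mul_sub_of_normCorrectedStep hdiff hLip hL (mul_nonneg (by positivity) (hgap t))
      (by linarith) hzr
  have hanti := antitone_of_sq_le_mul_sub_succ (by positivity) (by positivity) hgap hstep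
  have hrate := mul_le_of_sq_le_mul_sub_succ (by positivity) (by positivity) hgap hstep
  intro t
  have hlinear : gap t * (δ * t) ≤ 4 * ((2 / δ) * L * ρ ^ 2 * r ^ 2) :=
    calc gap t * (δ * t) = 4 * ρ ^ 2 / δ * (gap t * ((δ / (2 * ρ)) ^ 2 * t)) := by
          field_simp; ring
      _ ≤ 4 * ρ ^ 2 / δ * (2 * L * r ^ 2) := mul_le_mul_of_nonneg_left (hrate t) (by positivity)
      _ = 4 * ((2 / δ) * L * ρ ^ 2 * r ^ 2) := by ring
  rw [le_div_iff₀ (by positivity)]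
  linarith [hanti t.zero_le]

/-- Sublinear convergence of Norm-Corrective Generalized Matching Pursuit with a δ-approximate
linear minimization oracle (Theorem 2 / `thm:inexactMP`). -/
theorem matchingPursuit_sublinear_convergence
    {H : Type*} [NormedAddCommGroup H] [InnerProductSpace ℝ H] [CompleteSpace H]
    (A : Set H) (hA : A.Nonempty) (hAbdd : Bornology.IsBounded A)
    (hsym : A = -A)
    (L : ℝ) (hL : 0 < L)
    (f : H → ℝ) (f' : H → H)
    (hconv : ConvexOn ℝ Set.univ f)
    (hdiff : ∀ w : H, HasGradientAt f (f' w) w)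
    (hLip : ∀ u v : H, ‖f' u - f' v‖ ≤ L * ‖u - v‖)
    (δ : ℝ) (hδ : δ ∈ Set.Ioc (0:ℝ) 1)
    (ρ : ℝ) (hρ : 0 < ρ)
    (xstar : H) (hxstar : xstar ∈ ρ • convexHull ℝ A)
    (hmin : ∀ w ∈ ρ • convexHull ℝ A, f xstar ≤ f w)
    (x z : ℕ → H)
    (hxmem : ∀ t, x t ∈ ρ • convexHull ℝ A)
    (hzA : ∀ t, z t ∈ A)
    (hlmo : ∀ t, ⟪f' (x t), z t⟫ ≤ δ * sInf ((fun w => ⟪f' (x t), w⟫) '' A))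
    (hupd : ∀ t, x (t + 1) =
        x t + (if z t = 0 then (0:ℝ) else -⟪f' (x t), z t⟫ / (L * ‖z t‖ ^ 2)) • z t) :
    ∀ t : ℕ, f (x t) - f xstar ≤
      4 * ((2 / δ) * L * ρ ^ 2 * (sSup ((fun w : H => ‖w‖) '' A)) ^ 2 + (f (x 0) - f xstar))
        / (δ * t + 4) :=
  matchingPursuit_sublinear_convergence_general A hAbdd hsym L hL f f' hconv hdiff hLip δ hδ ρ hρ
    xstar hxstar hmin x z hxmem hzA hlmo hupd
end

section
/- Let H be a real Hilbert space, A ⊆ H a nonempty bounded symmetric set (A = −A), f : H → ℝ convex and Fréchet differentiable, δ ∈ (0,1], ρ > 0, and C > 0. Let x⋆ ∈ ρ·conv(A) satisfy f(x⋆) ≤ f(w) for all w ∈ ρ·conv(A). Let (x_t)_{t≥0} and (z_t)_{t≥0} satisfy: x_t ∈ ρ·conv(A) for every t; z_t ∈ A with ⟪∇f(x_t), z_t⟫ ≤ δ·inf_{z∈A} ⟪∇f(x_t), z⟫ (a δ-approximate matching-pursuit LMO output); and the per-iteration descent guarantee f(x_{t+1}) ≤ f(x_t) + γ·⟪∇f(x_t),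 ρ z_t⟫ + (γ²/2)·C for all γ ∈ [0,1] (which holds in particular for the affine-invariant generalized matching pursuit update x_{t+1} = x_t + (ρ²⟪−∇f(x_t), z_t⟫/C)·z_t under a curvature bound C over ρ·conv(A)). Then for every t ≥ 0, f(x_t) − f(x⋆) ≤ 4·((2/δ)·C + ε₀)/(δ·t + 4), where ε₀ := f(x₀) − f(x⋆). -/
open scoped RealInnerProductSpace Pointwise

/-!
Write `σ(g) = sup_{a ∈ A} ⟪g, a⟫`. Since `A = -A`, the infimum of `⟪g, ·⟫` over `A` is `-σ(g)` and
`ρ • conv A` is symmetric, so by the first-order convexity bound the gap `hₜ = f xₜ - f x⋆` is at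
most `⟪∇f xₜ, xₜ - x⋆⟫ ≤ 2ρσ`, while the approximate LMO gives `⟪∇f xₜ, ρ zₜ⟫ ≤ -δρσ ≤ -(δ/2) hₜ`.
The descent guarantee then becomes `hₜ₊₁ ≤ (1 - γδ/2) hₜ + γ²C/2`, and the step size
`γ = 4 / (δt + 4)` turns it into the usual `O(1/t)` induction.
-/

theorem ConvexOn.add_fderiv_sub_le {E : Type*} [NormedAddCommGroup E] [NormedSpace ℝ E]
    {f : E → ℝ} {f' : E →L[ℝ] ℝ} {a : E} (hf : ConvexOn ℝ Set.univ f)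
    (hf' : HasFDerivAt f f' a) (b : E) :
    f a + f' (b - a) ≤ f b := by
  have hline : ConvexOn ℝ Set.univ (f ∘ AffineMap.lineMap (k := ℝ) a b) := by
    simpa using hf.comp_affineMap (AffineMap.lineMap (k := ℝ) a b)
  have hderiv : HasDerivAt (f ∘ AffineMap.lineMap (k := ℝ) a b) (f' (b - a)) 0 := by
    refine HasFDerivAt.comp_hasDerivAt (0 : ℝ) ?_ AffineMap.hasDerivAt_lineMap
    simpa using hf'
  have := hline.le_slope_of_hasDerivAt (Set.mem_univ 0) (Set.mem_univ 1) one_pos hderiv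
  simp only [slope_def_field, Function.comp_apply, AffineMap.lineMap_apply_zero,
    AffineMap.lineMap_apply_one, sub_zero, div_one] at this
  linarith

theorem ConvexOn.add_inner_sub_le_of_hasGradientAt {H : Type*} [NormedAddCommGroup H]
    [InnerProductSpace ℝ H] [CompleteSpace H] {f : H → ℝ} {g a : H}
    (hf : ConvexOn ℝ Set.univ f) (hg : HasGradientAt f g a) (b : H) :
    f a + ⟪g, b - a⟫ ≤ f b := by
  simpa using hf.add_fderiv_sub_le hg.hasFDerivAt b

section SupportFunction

variable {H : Type*} [NormedAddCommGroup H] [InnerProductSpace ℝ H] {A : Set H}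

theorem Bornology.IsBounded.bddAbove_image_inner (hA : Bornology.IsBounded A) (g : H) :
    BddAbove ((⟪g, ·⟫) '' A) := by
  obtain ⟨R, hR⟩ := hA.exists_norm_le
  refine ⟨‖g‖ * R, ?_⟩
  rintro _ ⟨w, hw, rfl⟩
  exact (real_inner_le_norm g w).trans (by gcongr; exact hR w hw)

theorem inner_le_mul_sSup_of_mem_smul_convexHull (hA : Bornology.IsBounded A) {ρ : ℝ}
    (hρ : 0 ≤ ρ) (g : H) {w : H} (hw : w ∈ ρ • convexHull ℝ A) :
    ⟪g, w⟫ ≤ ρ * sSup ((⟪g, ·⟫) '' A) := by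
  obtain ⟨u, hu, rfl⟩ := hw
  have hhull : convexHull ℝ A ⊆ {w | ⟪g, w⟫ ≤ sSup ((⟪g, ·⟫) '' A)} :=
    convexHull_min (fun w hw => le_csSup (hA.bddAbove_image_inner g) ⟨w, hw, rfl⟩)
      (convex_halfSpace_le (innerₛₗ ℝ g).isLinear _)
  rw [real_inner_smul_right]
  exact mul_le_mul_of_nonneg_left (hhull hu) hρ

theorem sInf_image_inner_of_neg_eq (hsym : A = -A) (g : H) :
    sInf ((⟪g, ·⟫) '' A) = -sSup ((⟪g, ·⟫) '' A) := by
  rw [Real.sInf_def]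
  congr 2
  nth_rewrite 2 [hsym]
  ext y
  simp [inner_neg_right, neg_eq_iff_eq_neg]

theorem neg_mem_smul_convexHull_of_neg_eq (hsym : A = -A) {ρ : ℝ} {w : H}
    (hw : w ∈ ρ • convexHull ℝ A) : -w ∈ ρ • convexHull ℝ A := by
  rwa [hsym, convexHull_neg, Set.smul_set_neg, Set.neg_mem_neg]

end SupportFunction

theorem inner_smul_le_neg_half_mul_sub_of_le_mul_sInf {H : Type*} [NormedAddCommGroup H]
    [InnerProductSpace ℝ H] [CompleteSpace H] {A : Set H} (hA : Bornology.IsBounded A)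
    (hsym : A = -A) {f : H → ℝ} (hf : ConvexOn ℝ Set.univ f) {g x xstar z : H} {δ ρ : ℝ}
    (hg : HasGradientAt f g x) (hδ : 0 ≤ δ) (hρ : 0 ≤ ρ)
    (hx : x ∈ ρ • convexHull ℝ A) (hxstar : xstar ∈ ρ • convexHull ℝ A)
    (hz : ⟪g, z⟫ ≤ δ * sInf ((⟪g, ·⟫) '' A)) :
    ⟪g, ρ • z⟫ ≤ -(δ / 2) * (f x - f xstar) := by
  set σ := sSup ((⟪g, ·⟫) '' A)
  have hgap : f x - f xstar ≤ 2 * ρ * σ :=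
    calc f x - f xstar ≤ ⟪g, x - xstar⟫ := by
          have := hf.add_inner_sub_le_of_hasGradientAt hg xstar
          rw [inner_sub_right] at this ⊢
          linarith
      _ = ⟪g, x⟫ + ⟪g, -xstar⟫ := by rw [sub_eq_add_neg, inner_add_right]
      _ ≤ ρ * σ + ρ * σ := add_le_add (inner_le_mul_sSup_of_mem_smul_convexHull hA hρ g hx)
          (inner_le_mul_sSup_of_mem_smul_convexHull hA hρ g
            (neg_mem_smul_convexHull_of_neg_eq hsym hxstar))
      _ = 2 * ρ * σ := by ring
  have hlmo : ⟪g, ρ • z⟫ ≤ -(δ * ρ * σ) := by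
    rw [sInf_image_inner_of_neg_eq hsym] at hz
    rw [real_inner_smul_right]
    nlinarith
  linarith [mul_le_mul_of_nonneg_left hgap hδ]

theorem le_four_mul_div_add_of_le_one_sub_mul_add_sq {δ C K a h h' : ℝ} (hδ : 0 < δ)
    (hδ₁ : δ ≤ 1) (hC : 0 ≤ C) (hCK : 2 * C ≤ δ * K) (ha : 4 ≤ a) (hh : h ≤ 4 * K / a)
    (hh' : h' ≤ (1 - 4 / a * δ / 2) * h + (4 / a) ^ 2 / 2 * C) :
    h' ≤ 4 * K / (a + δ) := by
  have ha₀ : 0 < a := by linarith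
  have hK : 0 ≤ K := by nlinarith
  have hcoeff : 0 ≤ 1 - 4 / a * δ / 2 := by
    rw [sub_nonneg, div_mul_eq_mul_div, div_div, div_le_one (by positivity)]
    linarith
  calc h' ≤ (1 - 4 / a * δ / 2) * (4 * K / a) + (4 / a) ^ 2 / 2 * C := by
        linarith [mul_le_mul_of_nonneg_left hh hcoeff]
    _ = (4 * K * (a - δ) - 4 * (δ * K - 2 * C)) / a ^ 2 := by field_simp; ring
    _ ≤ 4 * K * (a - δ) / a ^ 2 := by gcongr; linarith
    _ ≤ 4 * K / (a + δ) := by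
        rw [div_le_div_iff₀ (by positivity) (by positivity)]
        nlinarith [mul_nonneg hK (sq_nonneg δ)]

theorem le_four_mul_div_of_forall_le_one_sub_mul_add_sq {δ C : ℝ} (hδ : δ ∈ Set.Ioc 0 1)
    (hC : 0 ≤ C) {h : ℕ → ℝ} (hh₀ : 0 ≤ h 0)
    (hrec : ∀ t, ∀ γ ∈ Set.Icc (0 : ℝ) 1, h (t + 1) ≤ (1 - γ * δ / 2) * h t + γ ^ 2 / 2 * C)
    (t : ℕ) : h t ≤ 4 * ((2 / δ) * C + h 0) / (δ * t + 4) := by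
  obtain ⟨hδ₀, hδ₁⟩ := hδ
  have hCK : 2 * C ≤ δ * ((2 / δ) * C + h 0) := by
    rw [mul_add, ← mul_assoc, mul_div_cancel₀ _ hδ₀.ne']
    nlinarith
  induction t with
  | zero =>
    rw [CharP.cast_eq_zero, mul_zero, zero_add, mul_div_cancel_left₀ _ four_ne_zero]
    exact le_add_of_nonneg_left (by positivity)
  | succ t ih =>
    have ha : 4 ≤ δ * t + 4 := le_add_of_nonneg_left (by positivity)
    have hγ : 4 / (δ * t + 4) ∈ Set.Icc (0 : ℝ) 1 :=
      ⟨by positivity, (div_le_one (by linarith)).2 ha⟩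
    push_cast
    rw [mul_add_one, add_right_comm]
    exact le_four_mul_div_add_of_le_one_sub_mul_add_sq hδ₀ hδ₁ hC hCK ha ih (hrec t _ hγ)

theorem affineInvariantMatchingPursuit_sublinear_convergence_general
    {H : Type*} [NormedAddCommGroup H] [InnerProductSpace ℝ H] [CompleteSpace H]
    (A : Set H) (hAbdd : Bornology.IsBounded A)
    (hsym : A = -A)
    (f : H → ℝ) (f' : H → H)
    (hconv : ConvexOn ℝ Set.univ f)
    (hdiff : ∀ w : H, HasGradientAt f (f' w) w)
    (δ : ℝ) (hδ : δ ∈ Set.Ioc (0:ℝ) 1)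
    (ρ : ℝ) (hρ : 0 < ρ)
    (C : ℝ) (hC : 0 < C)
    (xstar : H) (hxstar : xstar ∈ ρ • convexHull ℝ A)
    (hmin : ∀ w ∈ ρ • convexHull ℝ A, f xstar ≤ f w)
    (x z : ℕ → H)
    (hxmem : ∀ t, x t ∈ ρ • convexHull ℝ A)
    (hlmo : ∀ t, ⟪f' (x t), z t⟫ ≤ δ * sInf ((fun w => ⟪f' (x t), w⟫) '' A))
    (hdescent : ∀ t, ∀ γ ∈ Set.Icc (0:ℝ) 1,
        f (x (t + 1)) ≤ f (x t) + γ * ⟪f' (x t), ρ • z t⟫ + γ ^ 2 / 2 * C) :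
    ∀ t : ℕ, f (x t) - f xstar ≤
      4 * ((2 / δ) * C + (f (x 0) - f xstar)) / (δ * t + 4) := by
  have hstep : ∀ t, ⟪f' (x t), ρ • z t⟫ ≤ -(δ / 2) * (f (x t) - f xstar) := fun t =>
    inner_smul_le_neg_half_mul_sub_of_le_mul_sInf hAbdd hsym hconv (hdiff (x t)) hδ.1.le hρ.le
      (hxmem t) hxstar (hlmo t)
  refine le_four_mul_div_of_forall_le_one_sub_mul_add_sq hδ hC.le
    (sub_nonneg.2 (hmin _ (hxmem 0))) fun t γ hγ => ?_
  have := mul_le_mul_of_nonneg_left (hstep t) hγ.1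
  linarith [hdescent t γ hγ]

/-- Sublinear convergence of the Affine Invariant Generalized Matching Pursuit algorithm under
a curvature bound `C` (Theorem 7 / `thm:sublinearMPAffineInvariant`). -/
theorem affineInvariantMatchingPursuit_sublinear_convergence
    {H : Type*} [NormedAddCommGroup H] [InnerProductSpace ℝ H] [CompleteSpace H]
    (A : Set H) (hA : A.Nonempty) (hAbdd : Bornology.IsBounded A)
    (hsym : A = -A)
    (f : H → ℝ) (f' : H → H)
    (hconv : ConvexOn ℝ Set.univ f)
    (hdiff : ∀ w : H, HasGradientAt f (f' w) w)
    (δ : ℝ) (hδ : δ ∈ Set.Ioc (0:ℝ) 1)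
    (ρ : ℝ) (hρ : 0 < ρ)
    (C : ℝ) (hC : 0 < C)
    (xstar : H) (hxstar : xstar ∈ ρ • convexHull ℝ A)
    (hmin : ∀ w ∈ ρ • convexHull ℝ A, f xstar ≤ f w)
    (x z : ℕ → H)
    (hxmem : ∀ t, x t ∈ ρ • convexHull ℝ A)
    (hzA : ∀ t, z t ∈ A)
    (hlmo : ∀ t, ⟪f' (x t), z t⟫ ≤ δ * sInf ((fun w => ⟪f' (x t), w⟫) '' A))
    (hdescent : ∀ t, ∀ γ ∈ Set.Icc (0:ℝ) 1,
        f (x (t + 1)) ≤ f (x t) + γ * ⟪f' (x t), ρ • z t⟫ + γ ^ 2 / 2 * C) :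
    ∀ t : ℕ, f (x t) - f xstar ≤
      4 * ((2 / δ) * C + (f (x 0) - f xstar)) / (δ * t + 4) :=
  affineInvariantMatchingPursuit_sublinear_convergence_general A hAbdd hsym f f' hconv hdiff δ hδ ρ
    hρ C hC xstar hxstar hmin x z hxmem hlmo hdescent
end

section
/- Let H be a real Hilbert space and A ⊆ H a nonempty bounded set with mDW(A) > 0. Let f : H → ℝ be Fréchet differentiable and μ-strongly convex (μ > 0): f(v) ≥ f(u) + ⟪∇f(u), v − u⟫ + (μ/2)‖v − u‖² for all u, v ∈ H. Let x, y ∈ conv(A) with ⟪∇f(x), y − x⟫ < 0, and set S := sup_{s∈A} ⟪−∇f(x), s⟫. Then S > 0, and f(y) − f(x) − ⟪∇f(x), y − x⟫ ≥ (γ²/2)·μ·mDW(A)², where γ := ⟪−∇f(x), y − x⟫ / S. (Equivalently, the affine-invariant quantity μ^MP_{f,A} is bounded below by μ·mDW(A)².) -/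
/-!
Let `σ(d) = sup_{s ∈ A} ⟪d, s⟫` be the support function of `A`. By definition of `mDW`,
`‖d‖ · mDW(A) ≤ σ(d)` for `d` in the span of `A`, and since `σ` is Lipschitz this extends
to the closure `K` of the span. The projection `w` of `-∇f(x)` onto `K` has the same
support function and the same inner product with `y - x ∈ K`, so Cauchy–Schwarz gives
`⟪-∇f(x), y - x⟫ · mDW(A) ≤ ‖w‖ ‖y - x‖ mDW(A) ≤ S ‖y - x‖`, i.e. `γ · mDW(A) ≤ ‖y - x‖`.
Strong convexity bounds the left-hand side of the claim below by `μ/2 ‖y - x‖²`.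
-/

open scoped RealInnerProductSpace Pointwise

/-- Directional width of a set `A` in direction `d`: `W_A(d) = sup_{z ∈ A} ⟪d / ‖d‖, z⟫`. -/
noncomputable def dirWidth {H : Type*} [NormedAddCommGroup H] [InnerProductSpace ℝ H]
    (A : Set H) (d : H) : ℝ :=
  sSup ((fun z => ⟪(‖d‖)⁻¹ • d, z⟫) '' A)

noncomputable def mDW {H : Type*} [NormedAddCommGroup H] [InnerProductSpace ℝ H]
    (A : Set H) : ℝ :=
  sInf (dirWidth A '' {d | d ∈ Submodule.span ℝ A ∧ d ≠ 0})

open Bornology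

lemma sub_mem_span_of_mem_convexHull {E : Type*} [AddCommGroup E] [Module ℝ E] {A : Set E}
    {x y : E} (hx : x ∈ convexHull ℝ A) (hy : y ∈ convexHull ℝ A) :
    y - x ∈ Submodule.span ℝ A :=
  have hsub := convexHull_min Submodule.subset_span (Submodule.span ℝ A).convex
  sub_mem (hsub hy) (hsub hx)

section SupportFunction

variable {H : Type*} [NormedAddCommGroup H] [InnerProductSpace ℝ H] {A : Set H}

noncomputable def supportFun (A : Set H) (d : H) : ℝ :=
  sSup ((fun s => ⟪d, s⟫) '' A)

lemma bddAbove_inner_image (hAbdd : IsBounded A) (d : H) :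
    BddAbove ((fun s => ⟪d, s⟫) '' A) := by
  obtain ⟨C, hC⟩ := hAbdd.exists_norm_le
  refine ⟨‖d‖ * C, ?_⟩
  rintro _ ⟨s, hs, rfl⟩
  exact (real_inner_le_norm d s).trans (mul_le_mul_of_nonneg_left (hC s hs) (norm_nonneg d))

lemma inner_le_supportFun (hAbdd : IsBounded A) (d : H) {s : H} (hs : s ∈ A) :
    ⟪d, s⟫ ≤ supportFun A d :=
  le_csSup (bddAbove_inner_image hAbdd d) ⟨s, hs, rfl⟩

lemma supportFun_zero (hA : A.Nonempty) : supportFun A 0 = 0 := by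
  simp only [supportFun, inner_zero_left, hA.image_const, csSup_singleton]

lemma supportFun_le_add_mul {C : ℝ} (hA : A.Nonempty) (hC : ∀ s ∈ A, ‖s‖ ≤ C) (d e : H) :
    supportFun A d ≤ supportFun A e + C * ‖d - e‖ := by
  have hAbdd : IsBounded A := isBounded_iff_forall_norm_le.mpr ⟨C, hC⟩
  refine csSup_le (hA.image _) ?_
  rintro _ ⟨s, hs, rfl⟩
  calc ⟪d, s⟫ = ⟪e, s⟫ + ⟪d - e, s⟫ := by rw [inner_sub_left]; ring
    _ ≤ supportFun A e + ‖d - e‖ * ‖s‖ :=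
      add_le_add (inner_le_supportFun hAbdd e hs) (real_inner_le_norm _ _)
    _ ≤ supportFun A e + C * ‖d - e‖ := by
      rw [mul_comm]; gcongr; exact hC s hs

lemma continuous_supportFun (hA : A.Nonempty) (hAbdd : IsBounded A) :
    Continuous (supportFun A) := by
  obtain ⟨C, hC⟩ := hAbdd.exists_norm_le
  refine (LipschitzWith.of_le_add_mul' C fun d e => ?_).continuous
  rw [dist_eq_norm]
  exact supportFun_le_add_mul hA hC d e

lemma supportFun_starProjection (K : Submodule ℝ H) [K.HasOrthogonalProjection]
    (hAK : A ⊆ K) (d : H) : supportFun A (K.starProjection d) = supportFun A d := by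
  refine congrArg sSup (Set.image_congr fun s hs => ?_)
  rw [Submodule.inner_starProjection_left_eq_right,
    Submodule.starProjection_eq_self_iff.mpr (hAK hs)]

lemma dirWidth_eq_inv_norm_mul_supportFun (d : H) :
    dirWidth A d = ‖d‖⁻¹ * supportFun A d := by
  rw [dirWidth, supportFun, ← smul_eq_mul, ← Real.sSup_smul_of_nonneg (by positivity),
    ← Set.image_smul, Set.image_image]
  simp only [real_inner_smul_left, smul_eq_mul]

lemma bddBelow_dirWidth_image (hAbdd : IsBounded A) {a : H} (ha : a ∈ A) :
    BddBelow (dirWidth A '' {d | d ∈ Submodule.span ℝ A ∧ d ≠ 0}) := by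
  refine ⟨-‖a‖, ?_⟩
  rintro _ ⟨d, ⟨-, hd⟩, rfl⟩
  have hd : 0 < ‖d‖ := norm_pos_iff.mpr hd
  rw [dirWidth_eq_inv_norm_mul_supportFun, le_inv_mul_iff₀ hd, mul_neg]
  calc -(‖d‖ * ‖a‖) ≤ ⟪d, a⟫ := (abs_le.mp (abs_real_inner_le_norm d a)).1
    _ ≤ supportFun A d := inner_le_supportFun hAbdd d ha

lemma norm_mul_mDW_le_supportFun (hA : A.Nonempty) (hAbdd : IsBounded A) {d : H}
    (hd : d ∈ Submodule.span ℝ A) : ‖d‖ * mDW A ≤ supportFun A d := by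
  rcases eq_or_ne d 0 with rfl | hd0
  · simp [supportFun_zero hA]
  obtain ⟨a, ha⟩ := hA
  have hnorm : 0 < ‖d‖ := norm_pos_iff.mpr hd0
  have hle : mDW A ≤ dirWidth A d :=
    csInf_le (bddBelow_dirWidth_image hAbdd ha) ⟨d, ⟨hd, hd0⟩, rfl⟩
  rwa [dirWidth_eq_inv_norm_mul_supportFun, le_inv_mul_iff₀ hnorm] at hle

lemma norm_mul_mDW_le_supportFun_of_mem_closure (hA : A.Nonempty) (hAbdd : IsBounded A)
    {d : H} (hd : d ∈ (Submodule.span ℝ A).topologicalClosure) :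
    ‖d‖ * mDW A ≤ supportFun A d := by
  have hclosed : IsClosed {d : H | ‖d‖ * mDW A ≤ supportFun A d} :=
    isClosed_le (continuous_norm.mul continuous_const) (continuous_supportFun hA hAbdd)
  rw [← SetLike.mem_coe, Submodule.topologicalClosure_coe] at hd
  exact closure_minimal (fun _ => norm_mul_mDW_le_supportFun hA hAbdd) hclosed hd

lemma inner_mul_mDW_le_supportFun_mul_norm [CompleteSpace H] (hA : A.Nonempty)
    (hAbdd : IsBounded A) (hmdw : 0 ≤ mDW A) (d : H) {v : H} (hv : v ∈ Submodule.span ℝ A) :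
    ⟪d, v⟫ * mDW A ≤ supportFun A d * ‖v‖ := by
  set K := (Submodule.span ℝ A).topologicalClosure
  have hAK : A ⊆ K := fun s hs => Submodule.le_topologicalClosure _ (Submodule.subset_span hs)
  have hvK : v ∈ K := Submodule.le_topologicalClosure _ hv
  calc ⟪d, v⟫ * mDW A = ⟪K.starProjection d, v⟫ * mDW A := by
        rw [Submodule.inner_starProjection_left_eq_right,
          Submodule.starProjection_eq_self_iff.mpr hvK]
    _ ≤ ‖K.starProjection d‖ * ‖v‖ * mDW A := by gcongr; exact real_inner_le_norm _ _
    _ = ‖K.starProjection d‖ * mDW A * ‖v‖ := by ring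
    _ ≤ supportFun A (K.starProjection d) * ‖v‖ := by
        gcongr
        exact norm_mul_mDW_le_supportFun_of_mem_closure hA hAbdd (K.starProjection_apply_mem d)
    _ = supportFun A d * ‖v‖ := by rw [supportFun_starProjection K hAK]

end SupportFunction

theorem muMP_ge_strongConvexity_mul_mDW_sq_general
    {H : Type*} [NormedAddCommGroup H] [InnerProductSpace ℝ H] [CompleteSpace H]
    (A : Set H) (hA : A.Nonempty) (hAbdd : Bornology.IsBounded A)
    (hmdw : 0 < mDW A)
    (μ : ℝ) (hμ : 0 < μ)
    (f : H → ℝ) (f' : H → H)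
    (hstrong : ∀ u v : H, f u + ⟪f' u, v - u⟫ + μ / 2 * ‖v - u‖ ^ 2 ≤ f v)
    (x y : H) (hx : x ∈ convexHull ℝ A) (hy : y ∈ convexHull ℝ A)
    (hneg : ⟪f' x, y - x⟫ < 0) :
    0 < sSup ((fun s => ⟪-f' x, s⟫) '' A) ∧
      (⟪-f' x, y - x⟫ / sSup ((fun s => ⟪-f' x, s⟫) '' A)) ^ 2 / 2 * (μ * (mDW A) ^ 2)
        ≤ f y - f x - ⟪f' x, y - x⟫ := by
  change 0 < supportFun A (-f' x) ∧
    (⟪-f' x, y - x⟫ / supportFun A (-f' x)) ^ 2 / 2 * (μ * (mDW A) ^ 2) ≤ _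
  set S := supportFun A (-f' x)
  have hgap : 0 < ⟪-f' x, y - x⟫ := by rw [inner_neg_left]; linarith
  have hkey : ⟪-f' x, y - x⟫ * mDW A ≤ S * ‖y - x‖ :=
    inner_mul_mDW_le_supportFun_mul_norm hA hAbdd hmdw.le _
      (sub_mem_span_of_mem_convexHull hx hy)
  have hS : 0 < S :=
    pos_of_mul_pos_left ((mul_pos hgap hmdw).trans_le hkey) (norm_nonneg _)
  refine ⟨hS, ?_⟩
  have hγ : ⟪-f' x, y - x⟫ / S * mDW A ≤ ‖y - x‖ := by
    rwa [div_mul_eq_mul_div, div_le_iff₀ hS, mul_comm ‖y - x‖]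
  have hsq : (⟪-f' x, y - x⟫ / S * mDW A) ^ 2 ≤ ‖y - x‖ ^ 2 :=
    pow_le_pow_left₀ (by positivity) hγ 2
  calc (⟪-f' x, y - x⟫ / S) ^ 2 / 2 * (μ * mDW A ^ 2)
        = μ / 2 * (⟪-f' x, y - x⟫ / S * mDW A) ^ 2 := by ring
    _ ≤ μ / 2 * ‖y - x‖ ^ 2 := by gcongr
    _ ≤ f y - f x - ⟪f' x, y - x⟫ := by linarith [hstrong x y]

/-- The affine invariant strong-convexity quantity `μ^MP_{f,A}` is bounded below by
`μ · mDW(A)²` for a `μ`-strongly convex function (Lemma 2 / `lemma:MUFwithMDW`). -/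
theorem muMP_ge_strongConvexity_mul_mDW_sq
    {H : Type*} [NormedAddCommGroup H] [InnerProductSpace ℝ H] [CompleteSpace H]
    (A : Set H) (hA : A.Nonempty) (hAbdd : Bornology.IsBounded A)
    (hmdw : 0 < mDW A)
    (μ : ℝ) (hμ : 0 < μ)
    (f : H → ℝ) (f' : H → H)
    (hdiff : ∀ w : H, HasGradientAt f (f' w) w)
    (hstrong : ∀ u v : H, f u + ⟪f' u, v - u⟫ + μ / 2 * ‖v - u‖ ^ 2 ≤ f v)
    (x y : H) (hx : x ∈ convexHull ℝ A) (hy : y ∈ convexHull ℝ A)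
    (hneg : ⟪f' x, y - x⟫ < 0) :
    0 < sSup ((fun s => ⟪-f' x, s⟫) '' A) ∧
      (⟪-f' x, y - x⟫ / sSup ((fun s => ⟪-f' x, s⟫) '' A)) ^ 2 / 2 * (μ * (mDW A) ^ 2)
        ≤ f y - f x - ⟪f' x, y - x⟫ :=
  muMP_ge_strongConvexity_mul_mDW_sq_general A hA hAbdd hmdw μ hμ f f' hstrong x y hx hy hneg
end
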